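/- Let 𝒜 be a finite nonempty set of attributes on a set X of instances, μ a monotone measure on 𝒜, and α ∈ [0,1] such that μ_α := (1 − α)μ + α μ̄ is monotone. Then the α-Choquet distance admits the Möbius decomposition: for all x, y ∈ X, ∫ |a(x) − a(y)| dμ_α(a) = ∑_{∅ ≠ B ⊆ 𝒜} M_μ(B) · [(1 − α) · min_{a ∈ B} |a(x) − a(y)| + α · max_{a ∈ B} |a(x) − a(y)|]. -/

import Mathlib

open Finset

/-- The set `{x*_k, …, x*_{n-1}}` (0-indexed): the image under the enumeration `e`
of the indices `≥ k`. -/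
def upSet {X : Type*} [DecidableEq X] {n : ℕ} (e : Fin n ≃ X) (k : ℕ) : Finset X :=
  (Finset.univ.filter fun j : Fin n => k ≤ (j : ℕ)).image e

/-- The Choquet integral of `f` with respect to the set function `μ`, computed via an
enumeration `e : Fin n ≃ X` (assumed to sort `f` nondecreasingly):
`∑ i, f(x*_i) · [μ(A*_i) − μ(A*_{i+1})]` where `A*_i = {x*_i, …, x*_{n-1}}`
(note `A*_n = ∅`, and `μ ∅ = 0` for a monotone measure). -/
def choquetSum {X : Type*} [DecidableEq X] {n : ℕ} (μ : Finset X → ℝ) (f : X → ℝ)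
    (e : Fin n ≃ X) : ℝ :=
  ∑ i : Fin n, f (e i) * (μ (upSet e i) - μ (upSet e ((i : ℕ) + 1)))

/-- The dual measure `μ̄(A) := μ(X) − μ(X \ A)`. -/
def dualMeasure {X : Type*} [Fintype X] [DecidableEq X] (μ : Finset X → ℝ) :
    Finset X → ℝ :=
  fun A => μ Finset.univ - μ (Finset.univ \ A)

/-- The Möbius transform `M_μ(B) := ∑_{A ⊆ B} (−1)^{|B|−|A|} μ(A)`. -/
def mobius {X : Type*} (μ : Finset X → ℝ) (B : Finset X) : ℝ :=
  ∑ A ∈ B.powerset, (-1 : ℝ) ^ (B.card - A.card) * μ A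

/-!
Möbius inversion writes `μ` as the combination `∑_B M_μ(B) u_B` of unanimity games
`u_B(S) = [B ⊆ S]`, and both the Choquet sum and the passage to the dual measure are linear
in the measure. Along the chain `A*_k` of a sorting enumeration, `u_B(A*_k)` (resp. `ū_B(A*_k)`)
drops from 1 to 0 exactly after the first (resp. last) position occupied by `B`, so the Choquet
sum telescopes to `min_B f` (resp. `max_B f`).
-/

section ChoquetMobius

variable {X : Type*} [DecidableEq X]

theorem sum_Icc_neg_one_pow_card_sub {A S : Finset X} (hAS : A ⊆ S) :
    ∑ B ∈ Icc A S, (-1 : ℝ) ^ (#B - #A) = if A = S then 1 else 0 := by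
  have hdisj : ∀ C ∈ (S \ A).powerset, Disjoint A C := fun C hC =>
    disjoint_of_subset_right (mem_powerset.mp hC) disjoint_sdiff
  have hinj : Set.InjOn (A ∪ ·) ((S \ A).powerset : Set (Finset X)) := fun C hC D hD hCD => by
    simpa [union_sdiff_cancel_left (hdisj C hC), union_sdiff_cancel_left (hdisj D hD)]
      using congrArg (· \ A) hCD
  rw [Icc_eq_image_powerset hAS, sum_image hinj]
  calc ∑ C ∈ (S \ A).powerset, (-1 : ℝ) ^ (#(A ∪ C) - #A)
      = ∑ C ∈ (S \ A).powerset, (-1 : ℝ) ^ #C := sum_congr rfl fun C hC => by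
        rw [card_union_of_disjoint (hdisj C hC), Nat.add_sub_cancel_left]
    _ = ((∑ C ∈ (S \ A).powerset, (-1 : ℤ) ^ #C : ℤ) : ℝ) := by push_cast; rfl
    _ = if A = S then 1 else 0 := by
        have hSA : S \ A = ∅ ↔ A = S := by
          rw [sdiff_eq_empty_iff_subset]
          exact ⟨hAS.antisymm, fun h => h ▸ subset_rfl⟩
        rw [sum_powerset_neg_one_pow_card]
        simp only [hSA]
        split_ifs <;> norm_num

theorem sum_powerset_mobius (μ : Finset X → ℝ) (S : Finset X) :
    ∑ B ∈ S.powerset, mobius μ B = μ S := by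
  unfold mobius
  rw [sum_comm' (t' := S.powerset) (s' := fun A => Icc A S) fun B A => by
    simp only [mem_powerset, mem_Icc]
    exact ⟨fun ⟨hBS, hAB⟩ => ⟨⟨hAB, hBS⟩, hAB.trans hBS⟩, fun ⟨h, _⟩ => ⟨h.2, h.1⟩⟩]
  simp_rw [← sum_mul]
  rw [sum_congr rfl fun A hA => by rw [sum_Icc_neg_one_pow_card_sub (mem_powerset.mp hA)]]
  simp

def unanimity (B S : Finset X) : ℝ := if B ⊆ S then 1 else 0

theorem unanimity_empty : unanimity (∅ : Finset X) = fun _ => 1 := by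
  funext S
  simp [unanimity]

theorem sum_mobius_mul_unanimity [Fintype X] (μ : Finset X → ℝ) (S : Finset X) :
    ∑ B ∈ (univ : Finset X).powerset, mobius μ B * unanimity B S = μ S := by
  simp only [unanimity, mul_ite, mul_one, mul_zero, ← sum_filter]
  rw [← sum_powerset_mobius μ S]
  congr 1
  ext B
  simp

theorem dualMeasure_sum_mul [Fintype X] {ι : Type*} (s : Finset ι) (c : ι → ℝ)
    (ν : ι → Finset X → ℝ) :
    dualMeasure (fun S => ∑ i ∈ s, c i * ν i S) =
      fun S => ∑ i ∈ s, c i * dualMeasure (ν i) S := by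
  funext S
  simp only [dualMeasure, mul_sub, sum_sub_distrib]

theorem dualMeasure_const [Fintype X] (c : ℝ) :
    dualMeasure (fun _ : Finset X => c) = fun _ => 0 := by
  funext S
  simp [dualMeasure]

variable {n : ℕ} (e : Fin n ≃ X) (f : X → ℝ)

theorem choquetSum_add (μ ν : Finset X → ℝ) :
    choquetSum (fun S => μ S + ν S) f e = choquetSum μ f e + choquetSum ν f e := by
  simp only [choquetSum, ← sum_add_distrib]
  exact sum_congr rfl fun _ _ => by ring

theorem choquetSum_const_mul (c : ℝ) (μ : Finset X → ℝ) :
    choquetSum (fun S => c * μ S) f e = c * choquetSum μ f e := by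
  simp only [choquetSum, mul_sum]
  exact sum_congr rfl fun _ _ => by ring

theorem choquetSum_sum {ι : Type*} (s : Finset ι) (μ : ι → Finset X → ℝ) :
    choquetSum (fun S => ∑ i ∈ s, μ i S) f e = ∑ i ∈ s, choquetSum (μ i) f e := by
  simp only [choquetSum, ← sum_sub_distrib, mul_sum]
  exact sum_comm

theorem choquetSum_const (c : ℝ) : choquetSum (fun _ => c) f e = 0 := by
  simp [choquetSum]

theorem choquetSum_eq_sum_mobius_mul [Fintype X] (μ : Finset X → ℝ) :
    choquetSum μ f e =
      ∑ B ∈ (univ : Finset X).powerset, mobius μ B * choquetSum (unanimity B) f e := by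
  conv_lhs => rw [← funext (sum_mobius_mul_unanimity μ)]
  simp only [choquetSum_sum, choquetSum_const_mul]

theorem choquetSum_dualMeasure_eq_sum_mobius_mul [Fintype X] (μ : Finset X → ℝ) :
    choquetSum (dualMeasure μ) f e =
      ∑ B ∈ (univ : Finset X).powerset,
        mobius μ B * choquetSum (dualMeasure (unanimity B)) f e := by
  conv_lhs => rw [← funext (sum_mobius_mul_unanimity μ), dualMeasure_sum_mul]
  simp only [choquetSum_sum, choquetSum_const_mul]

theorem mem_upSet {k : ℕ} {b : X} : b ∈ upSet e k ↔ k ≤ e.symm b := by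
  simp only [upSet, mem_image, mem_filter, mem_univ, true_and]
  exact ⟨fun ⟨j, hj, hjb⟩ => hjb ▸ by simpa using hj, fun h => ⟨e.symm b, h, by simp⟩⟩

theorem choquetSum_eq_of_upSet_indicator (ν : Finset X → ℝ) (m : Fin n)
    (hν : ∀ k : ℕ, ν (upSet e k) = if k ≤ m then 1 else 0) :
    choquetSum ν f e = f (e m) := by
  have hstep : ∀ i : Fin n, ν (upSet e i) - ν (upSet e (i + 1)) = if i = m then 1 else 0 := by
    intro i
    simp only [hν, Fin.ext_iff]
    split_ifs <;> (try norm_num) <;> omega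
  simp [choquetSum, hstep]

theorem unanimity_upSet {B : Finset X} (hB : B.Nonempty) (k : ℕ) :
    unanimity B (upSet e k) = if k ≤ B.inf' hB e.symm then 1 else 0 := by
  have hsub : B ⊆ upSet e k ↔ k ≤ B.inf' hB e.symm := by
    rw [apply_inf'_eq_inf'_comp hB Fin.val Fin.coe_min, le_inf'_iff]
    simp [subset_iff, mem_upSet]
  simp only [unanimity, hsub]

theorem dualMeasure_unanimity_upSet [Fintype X] {B : Finset X} (hB : B.Nonempty) (k : ℕ) :
    dualMeasure (unanimity B) (upSet e k) = if k ≤ B.sup' hB e.symm then 1 else 0 := by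
  have hsub : B ⊆ univ \ upSet e k ↔ ¬ k ≤ B.sup' hB e.symm := by
    rw [apply_sup'_eq_sup'_comp hB Fin.val Fin.coe_max, not_le, sup'_lt_iff]
    simp [subset_iff, mem_upSet]
  simp only [dualMeasure, unanimity, subset_univ, hsub]
  split_ifs <;> norm_num

variable {f}

theorem choquetSum_unanimity (hf : Monotone fun i => f (e i)) {B : Finset X}
    (hB : B.Nonempty) :
    choquetSum (unanimity B) f e = B.inf' hB f := by
  rw [choquetSum_eq_of_upSet_indicator e f _ _ (unanimity_upSet e hB)]
  exact (apply_inf'_eq_inf'_comp hB (fun i => f (e i)) fun _ _ => hf.map_min).trans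
    (by simp)

theorem choquetSum_dualMeasure_unanimity [Fintype X] (hf : Monotone fun i => f (e i))
    {B : Finset X} (hB : B.Nonempty) :
    choquetSum (dualMeasure (unanimity B)) f e = B.sup' hB f := by
  rw [choquetSum_eq_of_upSet_indicator e f _ _ (dualMeasure_unanimity_upSet e hB)]
  exact (apply_sup'_eq_sup'_comp hB (fun i => f (e i)) fun _ _ => hf.map_max).trans
    (by simp)

end ChoquetMobius

theorem alpha_choquet_distance_mobius_decomposition_general
    {I A : Type*} [Fintype A] [DecidableEq A] {n : ℕ}
    (val : A → I → ℝ)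
    (μ : Finset A → ℝ)
    (α : ℝ)
    (x y : I)
    (e : Fin n ≃ A) (hsort : Monotone (fun i => |val (e i) x - val (e i) y|)) :
    choquetSum (fun S => (1 - α) * μ S + α * dualMeasure μ S)
        (fun a => |val a x - val a y|) e =
      ∑ B ∈ (Finset.univ : Finset A).powerset,
        if hB : B.Nonempty then
          mobius μ B *
            ((1 - α) * B.inf' hB (fun a => |val a x - val a y|) +
              α * B.sup' hB (fun a => |val a x - val a y|))
        else 0 := by
  rw [choquetSum_add, choquetSum_const_mul, choquetSum_const_mul,
    choquetSum_eq_sum_mobius_mul, choquetSum_dualMeasure_eq_sum_mobius_mul,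
    mul_sum, mul_sum, ← sum_add_distrib]
  refine sum_congr rfl fun B _ => ?_
  rcases B.eq_empty_or_nonempty with rfl | hB
  · simp [unanimity_empty, dualMeasure_const, choquetSum_const]
  · rw [dif_pos hB, choquetSum_unanimity e hsort hB,
      choquetSum_dualMeasure_unanimity e hsort hB]
    ring

/-- For `μ_α := (1−α)μ + αμ̄` monotone (`α ∈ [0,1]`), the α-Choquet
distance admits the Möbius decomposition
`∫ |a(x) − a(y)| dμ_α(a) = ∑_{∅ ≠ B ⊆ 𝒜} M_μ(B) · [(1−α)·min_{a ∈ B}|a(x) − a(y)| +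
α·max_{a ∈ B}|a(x) − a(y)|]`. -/
theorem alpha_choquet_distance_mobius_decomposition
    {I A : Type*} [Fintype A] [DecidableEq A] {n : ℕ} (hn : 0 < n)
    (val : A → I → ℝ)
    (μ : Finset A → ℝ) (hμ_empty : μ ∅ = 0)
    (hμ_mono : ∀ S T : Finset A, S ⊆ T → μ S ≤ μ T)
    (α : ℝ) (hα : α ∈ Set.Icc (0 : ℝ) 1)
    (hα_mono : ∀ S T : Finset A, S ⊆ T →
      (1 - α) * μ S + α * dualMeasure μ S ≤ (1 - α) * μ T + α * dualMeasure μ T)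
    (x y : I)
    (e : Fin n ≃ A) (hsort : Monotone (fun i => |val (e i) x - val (e i) y|)) :
    choquetSum (fun S => (1 - α) * μ S + α * dualMeasure μ S)
        (fun a => |val a x - val a y|) e =
      ∑ B ∈ (Finset.univ : Finset A).powerset,
        if hB : B.Nonempty then
          mobius μ B *
            ((1 - α) * B.inf' hB (fun a => |val a x - val a y|) +
              α * B.sup' hB (fun a => |val a x - val a y|))
        else 0 :=
  alpha_choquet_distance_mobius_decomposition_general val μ α x y e hsort
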